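/- Let R₁ = ℤ[X,Y]/(X², Y²) with x, y the images of X, Y, and let φ be a ring automorphism of R₁ that maps the additive subgroup generated by x and y onto itself (i.e., φ preserves degree two). Then φ maps the set {x, −x, y, −y} onto itself; in particular φ(x) and φ(y) each lie in {x, −x, y, −y}. -/

import Mathlib

/-!
Write `L` for the additive subgroup `ℤx + ℤy`. Since `(ax + by)² = 2ab·xy` and `xy` has infinite
additive order, the elements of `L` squaring to zero are the multiples of `x` and of `y`; among
them `±x, ±y` are exactly the primitive ones, i.e. those that are not `n • w` with `w ∈ L` and
`n ≠ ±1`. This description of `{x, -x, y, -y}` only uses the ring structure and `L`, so it is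
preserved by every ring automorphism mapping `L` onto itself.
-/

open MvPolynomial

/-- The ideal (X², Y²) in ℤ[X,Y]. -/
noncomputable def I1 : Ideal (MvPolynomial (Fin 2) ℤ) :=
  Ideal.span {X 0 ^ 2, X 1 ^ 2}

/-- The ring R₁ = ℤ[X,Y]/(X², Y²), the integral cohomology ring of S² × S². -/
abbrev R1 : Type := MvPolynomial (Fin 2) ℤ ⧸ I1

/-- The image x of X in R₁. -/
noncomputable def R1x : R1 := Ideal.Quotient.mk I1 (X 0)

/-- The image y of Y in R₁. -/
noncomputable def R1y : R1 := Ideal.Quotient.mk I1 (X 1)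

section PrimitiveSquareZero

variable {R S : Type*} [Ring R] [Ring S]

def primitiveSquareZero (L : Set R) : Set R :=
  {u | u ∈ L ∧ u ^ 2 = 0 ∧ ∀ (n : ℤ), ∀ w ∈ L, u = n • w → IsUnit n}

theorem RingEquiv.image_primitiveSquareZero (φ : R ≃+* S) (L : Set R) :
    φ '' primitiveSquareZero L = primitiveSquareZero (φ '' L) := by
  ext v
  constructor
  · rintro ⟨u, ⟨hu, hsq, hprim⟩, rfl⟩
    refine ⟨Set.mem_image_of_mem φ hu, by rw [← map_pow, hsq, map_zero], ?_⟩
    rintro n _ ⟨w, hw, rfl⟩ he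
    exact hprim n w hw (φ.injective (by rw [he, map_zsmul]))
  · rintro ⟨⟨u, hu, rfl⟩, hsq, hprim⟩
    refine ⟨u, ⟨hu, φ.injective (by rw [map_pow, hsq, map_zero]), ?_⟩, rfl⟩
    rintro n w hw rfl
    exact hprim n (φ w) (Set.mem_image_of_mem φ hw) (map_zsmul φ n w)

theorem neg_mem_primitiveSquareZero {L : AddSubgroup R} {u : R}
    (hu : u ∈ primitiveSquareZero (L : Set R)) : -u ∈ primitiveSquareZero (L : Set R) := by
  obtain ⟨huL, hsq, hprim⟩ := hu
  refine ⟨L.neg_mem huL, by rw [neg_sq, hsq], fun n w hw he => ?_⟩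
  exact hprim n (-w) (L.neg_mem hw) (by rw [smul_neg, ← he, neg_neg])

end PrimitiveSquareZero

theorem coeff_eq_zero_of_mem_I1 {p : MvPolynomial (Fin 2) ℤ} (hp : p ∈ I1)
    {m : Fin 2 →₀ ℕ} (h0 : m 0 ≤ 1) (h1 : m 1 ≤ 1) : coeff m p = 0 := by
  have hI1 : I1 = Ideal.span ((fun s => monomial s (1 : ℤ)) ''
      {Finsupp.single 0 2, Finsupp.single 1 2}) := by
    simp [I1, Set.image_pair, X_pow_eq_monomial]
  rw [hI1, mem_ideal_span_monomial_image] at hp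
  by_contra hm
  obtain ⟨s, hs, hle⟩ := hp m (mem_support_iff.mpr hm)
  rcases hs with rfl | rfl
  · have : 2 ≤ m 0 := by simpa using hle 0
    omega
  · have : 2 ≤ m 1 := by simpa using hle 1
    omega

theorem R1_coeffs_eq_zero {a b c : ℤ} (h : a • R1x + b • R1y + c • (R1x * R1y) = 0) :
    a = 0 ∧ b = 0 ∧ c = 0 := by
  rw [R1x, R1y, ← map_mul, ← map_zsmul, ← map_zsmul, ← map_zsmul, ← map_add, ← map_add,
    Ideal.Quotient.eq_zero_iff_mem] at h
  have hcoeff := fun m h0 h1 => coeff_eq_zero_of_mem_I1 h (m := m) h0 h1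
  simp only [coeff_add, coeff_smul, coeff_X, coeff_X_mul', smul_eq_mul] at hcoeff
  refine ⟨?_, ?_, ?_⟩
  · simpa [Finsupp.single_eq_single_iff] using hcoeff (Finsupp.single 0 1) (by simp) (by simp)
  · simpa [Finsupp.single_eq_single_iff] using hcoeff (Finsupp.single 1 1) (by simp) (by simp)
  · have := hcoeff (Finsupp.single 0 1 + Finsupp.single 1 1) (by simp) (by simp)
    simpa [Finsupp.ext_iff, Fin.forall_fin_two] using this

theorem R1x_sq : R1x ^ 2 = 0 := by
  rw [R1x, ← map_pow, Ideal.Quotient.eq_zero_iff_mem, I1]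
  exact Ideal.subset_span (by simp)

theorem R1y_sq : R1y ^ 2 = 0 := by
  rw [R1y, ← map_pow, Ideal.Quotient.eq_zero_iff_mem, I1]
  exact Ideal.subset_span (by simp)

theorem R1_mul_eq_zero_of_sq_eq_zero {a b : ℤ} (h : (a • R1x + b • R1y) ^ 2 = 0) :
    a * b = 0 := by
  have hsq : (a • R1x + b • R1y) ^ 2 = (2 * a * b) • (R1x * R1y) := by
    simp only [zsmul_eq_mul]
    push_cast
    linear_combination (a : R1) ^ 2 * R1x_sq + (b : R1) ^ 2 * R1y_sq
  obtain ⟨-, -, hab⟩ := R1_coeffs_eq_zero (a := 0) (b := 0) (c := 2 * a * b)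
    (by rw [zero_smul, zero_smul, zero_add, zero_add, ← hsq, h])
  linarith

theorem R1x_mem_primitiveSquareZero :
    R1x ∈ primitiveSquareZero (AddSubgroup.closure ({R1x, R1y} : Set R1) : Set R1) := by
  refine ⟨AddSubgroup.subset_closure (by simp), R1x_sq, fun n w hw he => ?_⟩
  obtain ⟨c, d, rfl⟩ := AddSubgroup.mem_closure_pair.mp hw
  have := R1_coeffs_eq_zero (a := 1 - n * c) (b := -(n * d)) (c := 0)
    (by linear_combination (norm := module) he)
  exact IsUnit.of_mul_eq_one c (by omega)

theorem R1y_mem_primitiveSquareZero :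
    R1y ∈ primitiveSquareZero (AddSubgroup.closure ({R1x, R1y} : Set R1) : Set R1) := by
  refine ⟨AddSubgroup.subset_closure (by simp), R1y_sq, fun n w hw he => ?_⟩
  obtain ⟨c, d, rfl⟩ := AddSubgroup.mem_closure_pair.mp hw
  have := R1_coeffs_eq_zero (a := -(n * c)) (b := 1 - n * d) (c := 0)
    (by linear_combination (norm := module) he)
  exact IsUnit.of_mul_eq_one d (by omega)

theorem primitiveSquareZero_closure_R1 :
    primitiveSquareZero (AddSubgroup.closure ({R1x, R1y} : Set R1) : Set R1) =
      {R1x, -R1x, R1y, -R1y} := by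
  ext u
  constructor
  · rintro ⟨hu, hsq, hprim⟩
    obtain ⟨a, b, rfl⟩ := AddSubgroup.mem_closure_pair.mp hu
    rcases mul_eq_zero.mp (R1_mul_eq_zero_of_sq_eq_zero hsq) with rfl | rfl
    · rcases Int.isUnit_iff.mp (hprim b R1y R1y_mem_primitiveSquareZero.1 (by simp))
        with rfl | rfl <;> simp
    · rcases Int.isUnit_iff.mp (hprim a R1x R1x_mem_primitiveSquareZero.1 (by simp))
        with rfl | rfl <;> simp
  · rintro (rfl | rfl | rfl | rfl)
    · exact R1x_mem_primitiveSquareZero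
    · exact neg_mem_primitiveSquareZero R1x_mem_primitiveSquareZero
    · exact R1y_mem_primitiveSquareZero
    · exact neg_mem_primitiveSquareZero R1y_mem_primitiveSquareZero

/-- Every ring automorphism of R₁ = ℤ[X,Y]/(X², Y²) which maps the additive subgroup generated
by x and y onto itself (i.e., preserves degree two) maps the set {x, −x, y, −y} onto itself;
in particular, the images of x and y lie in {x, −x, y, −y}. -/
theorem automorphism_R1_preserves (φ : R1 ≃+* R1)
    (h : ⇑φ '' (AddSubgroup.closure ({R1x, R1y} : Set R1) : Set R1)
        = (AddSubgroup.closure ({R1x, R1y} : Set R1) : Set R1)) :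
    ⇑φ '' ({R1x, -R1x, R1y, -R1y} : Set R1) = ({R1x, -R1x, R1y, -R1y} : Set R1) ∧
      φ R1x ∈ ({R1x, -R1x, R1y, -R1y} : Set R1) ∧
      φ R1y ∈ ({R1x, -R1x, R1y, -R1y} : Set R1) := by
  have himage : ⇑φ '' ({R1x, -R1x, R1y, -R1y} : Set R1) = {R1x, -R1x, R1y, -R1y} := by
    rw [← primitiveSquareZero_closure_R1, φ.image_primitiveSquareZero, h]
  refine ⟨himage, ?_, ?_⟩ <;> rw [← himage] <;> exact Set.mem_image_of_mem φ (by simp)
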